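/- arXiv:2410.22656 — 3 statements merged into one kernel-verified Lean document; each statement's English description precedes it below -/
import Mathlib

section
/- For a random variable X with 0 < a < X < b < ∞ almost surely, the Jensen gap satisfies Var(X)/(2b²) ≤ log(E[X]) − E[log X] ≤ Var(X)/(2a²). -/
open MeasureTheory ProbabilityTheory Real

/-! With `m = E[X]`, the function `φ x = log m - log x + (x - m) / m` satisfies
`E[φ X] = log E[X] - E[log X]`, `φ m = φ' m = 0` and `φ'' x = 1 / x²`. Hence for `x` and `m` in
`[a, b]` the derivative of `φ x - (x - m)² / (2c²)` has the sign of `x - m` when `c = b` and the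
opposite sign when `c = a`, which squeezes `φ x` between `(x - m)² / (2b²)` and `(x - m)² / (2a²)`.
Integrating, with `E[(X - m)²] = Var X`, gives both bounds. -/

theorem isMinOn_of_sub_mul_deriv_nonneg {f f' : ℝ → ℝ} {s : Set ℝ} [s.OrdConnected] {m : ℝ}
    (hm : m ∈ s) (hf : ∀ y ∈ s, HasDerivAt f (f' y) y) (hf' : ∀ y ∈ s, 0 ≤ (y - m) * f' y) :
    IsMinOn f s m := by
  intro x hx
  have hcont : ∀ {u v}, u ∈ s → v ∈ s → ContinuousOn f (Set.Icc u v) := fun hu hv y hy =>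
    (hf y (Set.Icc_subset s hu hv hy)).continuousAt.continuousWithinAt
  have hderiv : ∀ {u v}, u ∈ s → v ∈ s → ∀ y ∈ interior (Set.Icc u v),
      HasDerivWithinAt f (f' y) (interior (Set.Icc u v)) y := fun hu hv y hy =>
    (hf y (Set.Icc_subset s hu hv (interior_subset hy))).hasDerivWithinAt
  rcases le_total m x with hmx | hxm
  · refine monotoneOn_of_hasDerivWithinAt_nonneg (convex_Icc m x) (hcont hm hx) (hderiv hm hx)
      (fun y hy => ?_) (Set.left_mem_Icc.2 hmx) (Set.right_mem_Icc.2 hmx) hmx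
    rw [interior_Icc] at hy
    exact nonneg_of_mul_nonneg_right (hf' y (Set.Icc_subset s hm hx (Set.Ioo_subset_Icc_self hy)))
      (sub_pos.2 hy.1)
  · refine antitoneOn_of_hasDerivWithinAt_nonpos (convex_Icc x m) (hcont hx hm) (hderiv hx hm)
      (fun y hy => ?_) (Set.left_mem_Icc.2 hxm) (Set.right_mem_Icc.2 hxm) hxm
    rw [interior_Icc] at hy
    exact nonpos_of_mul_nonneg_right (hf' y (Set.Icc_subset s hx hm (Set.Ioo_subset_Icc_self hy)))
      (sub_neg.2 hy.2)

theorem hasDerivAt_log_gap_sub_sq {m y : ℝ} (c : ℝ) (hm : m ≠ 0) (hy : y ≠ 0) :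
    HasDerivAt (fun t => log m - log t + (t - m) / m - (t - m) ^ 2 / (2 * c ^ 2))
      ((y - m) * ((m * y)⁻¹ - (c ^ 2)⁻¹)) y := by
  have hlin : HasDerivAt (fun t => (t - m) / m) m⁻¹ y := by
    simpa using ((hasDerivAt_id' y).sub_const m).div_const m
  have hsq : HasDerivAt (fun t => (t - m) ^ 2 / (2 * c ^ 2)) (2 * (y - m) / (2 * c ^ 2)) y := by
    simpa using (((hasDerivAt_id' y).sub_const m).pow 2).div_const (2 * c ^ 2)
  refine ((((hasDerivAt_log hy).const_sub (log m)).add hlin).sub hsq).congr_deriv ?_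
  field_simp
  ring

theorem sq_div_le_log_sub_log_add {m x c : ℝ} (hm : 0 < m) (hx : 0 < x) (hmc : m ≤ c)
    (hxc : x ≤ c) : (x - m) ^ 2 / (2 * c ^ 2) ≤ log m - log x + (x - m) / m := by
  have hmin := isMinOn_of_sub_mul_deriv_nonneg (s := Set.Ioc 0 c) ⟨hm, hmc⟩
    (fun y hy => hasDerivAt_log_gap_sub_sq c hm.ne' hy.1.ne') fun y hy => by
      rw [← mul_assoc, ← sq]
      refine mul_nonneg (sq_nonneg _) (sub_nonneg.2 (inv_anti₀ (mul_pos hm hy.1) ?_))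
      exact (mul_le_mul hmc hy.2 hy.1.le (hm.le.trans hmc)).trans_eq (sq c).symm
  simpa using hmin ⟨hx, hxc⟩

theorem log_sub_log_add_le_sq_div {m x d : ℝ} (hd : 0 < d) (hdm : d ≤ m) (hdx : d ≤ x) :
    log m - log x + (x - m) / m ≤ (x - m) ^ 2 / (2 * d ^ 2) := by
  have hm := hd.trans_le hdm
  have hmin := isMinOn_of_sub_mul_deriv_nonneg (s := Set.Ici d) hdm
    (fun y hy => (hasDerivAt_log_gap_sub_sq d hm.ne' (hd.trans_le hy).ne').neg) fun y hy => by
      rw [mul_neg, ← mul_assoc, ← sq, neg_nonneg]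
      refine mul_nonpos_of_nonneg_of_nonpos (sq_nonneg _)
        (sub_nonpos.2 (inv_anti₀ (by positivity) ?_))
      exact (sq d).trans_le (mul_le_mul hdm hy hd.le hm.le)
  simpa using hmin hdx

section Integrals

variable {Ω : Type*} [MeasurableSpace Ω] {μ : Measure Ω} [IsProbabilityMeasure μ] {X : Ω → ℝ}

theorem integral_log_gap (hX : Integrable X μ) (hlog : Integrable (fun ω => log (X ω)) μ) :
    ∫ ω, (log μ[X] - log (X ω) + (X ω - μ[X]) / μ[X]) ∂μ = log μ[X] - ∫ ω, log (X ω) ∂μ := by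
  have hlog' : Integrable (fun ω => log μ[X] - log (X ω)) μ := (integrable_const _).sub hlog
  have hlin : Integrable (fun ω => (X ω - μ[X]) / μ[X]) μ :=
    (hX.sub (integrable_const _)).div_const _
  rw [integral_add hlog' hlin, integral_sub (integrable_const _) hlog, integral_div,
    integral_sub hX (integrable_const _)]
  simp

theorem integral_sub_integral_sq_div (hX : Integrable X μ) (hX2 : Integrable (fun ω => X ω ^ 2) μ)
    (c : ℝ) : ∫ ω, (X ω - μ[X]) ^ 2 / c ∂μ = (∫ ω, X ω ^ 2 ∂μ - μ[X] ^ 2) / c := by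
  rw [integral_div, ← variance_eq_integral hX.aemeasurable,
    variance_eq_sub ((memLp_two_iff_integrable_sq hX.aestronglyMeasurable).2 hX2)]
  rfl

end Integrals

theorem stmt_0_general {Ω : Type*} [MeasurableSpace Ω] (μ : Measure Ω) [IsProbabilityMeasure μ]
    (X : Ω → ℝ) (a b : ℝ) (ha : 0 < a)
    (hbd : ∀ᵐ ω ∂μ, a < X ω ∧ X ω < b)
    (hX : Integrable X μ) (hX2 : Integrable (fun ω => X ω ^ 2) μ)
    (hlog : Integrable (fun ω => Real.log (X ω)) μ) :
    ((∫ ω, X ω ^ 2 ∂μ) - (∫ ω, X ω ∂μ) ^ 2) / (2 * b ^ 2)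
      ≤ Real.log (∫ ω, X ω ∂μ) - ∫ ω, Real.log (X ω) ∂μ ∧
    Real.log (∫ ω, X ω ∂μ) - ∫ ω, Real.log (X ω) ∂μ
      ≤ ((∫ ω, X ω ^ 2 ∂μ) - (∫ ω, X ω ∂μ) ^ 2) / (2 * a ^ 2) := by
  have ham : a ≤ μ[X] := by
    simpa using integral_mono_ae (integrable_const a) hX (hbd.mono fun ω h => h.1.le)
  have hmb : μ[X] ≤ b := by
    simpa using integral_mono_ae hX (integrable_const b) (hbd.mono fun ω h => h.2.le)
  have hgap : Integrable (fun ω => log μ[X] - log (X ω) + (X ω - μ[X]) / μ[X]) μ :=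
    ((integrable_const _).sub hlog).add ((hX.sub (integrable_const _)).div_const _)
  have hsq (c : ℝ) : Integrable (fun ω => (X ω - μ[X]) ^ 2 / c) μ :=
    ((((memLp_two_iff_integrable_sq hX.aestronglyMeasurable).2 hX2).sub
      (memLp_const _)).integrable_sq).div_const c
  rw [← integral_log_gap hX hlog, ← integral_sub_integral_sq_div hX hX2,
    ← integral_sub_integral_sq_div hX hX2]
  exact ⟨integral_mono_ae (hsq _) hgap (hbd.mono fun ω h =>
      sq_div_le_log_sub_log_add (ha.trans_le ham) (ha.trans h.1) hmb h.2.le),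
    integral_mono_ae hgap (hsq _) (hbd.mono fun ω h => log_sub_log_add_le_sq_div ha ham h.1.le)⟩

/-- For a random variable X with 0 < a < X < b < ∞ almost surely, the Jensen gap satisfies
Var(X)/(2b²) ≤ log(E[X]) − E[log X] ≤ Var(X)/(2a²). -/
theorem stmt_0 {Ω : Type*} [MeasurableSpace Ω] (μ : Measure Ω) [IsProbabilityMeasure μ]
    (X : Ω → ℝ) (a b : ℝ) (ha : 0 < a) (hab : a < b)
    (hbd : ∀ᵐ ω ∂μ, a < X ω ∧ X ω < b)
    (hX : Integrable X μ) (hX2 : Integrable (fun ω => X ω ^ 2) μ)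
    (hlog : Integrable (fun ω => Real.log (X ω)) μ) :
    ((∫ ω, X ω ^ 2 ∂μ) - (∫ ω, X ω ∂μ) ^ 2) / (2 * b ^ 2)
      ≤ Real.log (∫ ω, X ω ∂μ) - ∫ ω, Real.log (X ω) ∂μ ∧
    Real.log (∫ ω, X ω ∂μ) - ∫ ω, Real.log (X ω) ∂μ
      ≤ ((∫ ω, X ω ^ 2 ∂μ) - (∫ ω, X ω ∂μ) ^ 2) / (2 * a ^ 2) :=
  stmt_0_general μ X a b ha hbd hX hX2 hlog
end

section
/- If L : ℝᵈ → ℝ is twice continuously differentiable and μ-strongly convex, then the tilted objective Lᵗ(θ) = (1/t) log E_ε[e^{t L(θ+ε)}] is μ-strongly convex, i.e., its Hessian satisfies ∇²Lᵗ(θ) ⪰ μI. -/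
/-!
Strong convexity of `L` gives, for every noise value `ε`,
`t L(a x + b y + ε) ≤ a t L(x + ε) + b t L(y + ε) - t a b (m/2) ‖x - y‖²`. Exponentiating,
integrating and applying Hölder's inequality with exponents `1/a`, `1/b`
(`∫ e^{a F + b G} ≤ (∫ e^F)^a (∫ e^G)^b`) shows that `θ ↦ log E[e^{t L(θ + ε)}]` is
`t m`-strongly convex; dividing by `t > 0` gives the claim.
-/

open MeasureTheory Real

section UniformConvexOn

variable {E : Type*} [NormedAddCommGroup E] [NormedSpace ℝ E] {s : Set E} {φ : ℝ → ℝ} {f : E → ℝ}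

lemma UniformConvexOn.comp_add_const (hf : UniformConvexOn s φ f) (z : E) :
    UniformConvexOn ((fun x => x + z) ⁻¹' s) φ (fun x => f (x + z)) := by
  refine ⟨hf.1.translate_preimage_left z, fun x hx y hy a b ha hb hab => ?_⟩
  have hcomb : a • (x + z) + b • (y + z) = a • x + b • y + z := by
    rw [smul_add, smul_add, add_add_add_comm, ← add_smul, hab, one_smul]
  simpa only [hcomb, add_sub_add_right_eq_sub] using hf.2 hx hy ha hb hab

lemma UniformConvexOn.const_mul (hf : UniformConvexOn s φ f) {c : ℝ} (hc : 0 ≤ c) :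
    UniformConvexOn s (fun r => c * φ r) (fun x => c * f x) := by
  refine ⟨hf.1, fun x hx y hy a b ha hb hab => ?_⟩
  have h := mul_le_mul_of_nonneg_left (hf.2 hx hy ha hb hab) hc
  simp only [smul_eq_mul] at h ⊢
  linarith

lemma StrongConvexOn.const_mul {m : ℝ} (hf : StrongConvexOn s m f) {c : ℝ} (hc : 0 ≤ c) :
    StrongConvexOn s (c * m) (fun x => c * f x) := by
  unfold StrongConvexOn
  convert UniformConvexOn.const_mul hf hc using 2 with r
  ring

end UniformConvexOn

section ExpHolder

variable {α : Type*} [MeasurableSpace α] {μ : Measure α} {f g : α → ℝ} {a b : ℝ}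

lemma exp_mul_add_mul_eq_rpow_mul_rpow (x y : ℝ) :
    exp (a * x + b * y) = exp x ^ a * exp y ^ b := by
  rw [exp_add, mul_comm a, exp_mul, mul_comm b, exp_mul]

lemma integrable_exp_convexComb (hf : Integrable (fun x => exp (f x)) μ)
    (hg : Integrable (fun x => exp (g x)) μ) (ha : 0 ≤ a) (hb : 0 ≤ b) (hab : a + b = 1) :
    Integrable (fun x => exp (a * f x + b * g x)) μ := by
  have hmeas : AEStronglyMeasurable (fun x => exp (a * f x + b * g x)) μ := by
    simp only [exp_mul_add_mul_eq_rpow_mul_rpow]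
    exact ((hf.aemeasurable.pow_const a).mul (hg.aemeasurable.pow_const b)).aestronglyMeasurable
  refine ((hf.const_mul a).add (hg.const_mul b)).mono' hmeas (ae_of_all _ fun x => ?_)
  rw [norm_of_nonneg (exp_pos _).le]
  exact convexOn_exp.2 (Set.mem_univ (f x)) (Set.mem_univ (g x)) ha hb hab

lemma integral_exp_convexComb_le (hf : Integrable (fun x => exp (f x)) μ)
    (hg : Integrable (fun x => exp (g x)) μ) (ha : 0 ≤ a) (hb : 0 ≤ b) (hab : a + b = 1) :
    ∫ x, exp (a * f x + b * g x) ∂μ ≤ (∫ x, exp (f x) ∂μ) ^ a * (∫ x, exp (g x) ∂μ) ^ b := by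
  have hpos : ∀ h : α → ℝ, 0 ≤ᵐ[μ] fun x => exp (h x) := fun h =>
    ae_of_all _ fun x => (exp_pos _).le
  rw [← ENNReal.ofReal_le_ofReal_iff (by positivity),
    ofReal_integral_eq_lintegral_ofReal (integrable_exp_convexComb hf hg ha hb hab) (hpos _),
    ENNReal.ofReal_mul (by positivity),
    ← ENNReal.ofReal_rpow_of_nonneg (integral_nonneg fun x => (exp_pos _).le) ha,
    ← ENNReal.ofReal_rpow_of_nonneg (integral_nonneg fun x => (exp_pos _).le) hb,
    ofReal_integral_eq_lintegral_ofReal hf (hpos _), ofReal_integral_eq_lintegral_ofReal hg (hpos _)]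
  calc ∫⁻ x, ENNReal.ofReal (exp (a * f x + b * g x)) ∂μ
      = ∫⁻ x, ENNReal.ofReal (exp (f x)) ^ a * ENNReal.ofReal (exp (g x)) ^ b ∂μ := by
        congr 1 with x
        rw [exp_mul_add_mul_eq_rpow_mul_rpow, ENNReal.ofReal_mul (by positivity),
          ENNReal.ofReal_rpow_of_nonneg (exp_pos _).le ha,
          ENNReal.ofReal_rpow_of_nonneg (exp_pos _).le hb]
    _ ≤ _ := ENNReal.lintegral_mul_norm_pow_le hf.aemeasurable.ennreal_ofReal
        hg.aemeasurable.ennreal_ofReal ha hb hab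

lemma log_integral_exp_convexComb_le [NeZero μ] (hf : Integrable (fun x => exp (f x)) μ)
    (hg : Integrable (fun x => exp (g x)) μ) (ha : 0 ≤ a) (hb : 0 ≤ b) (hab : a + b = 1) :
    log (∫ x, exp (a * f x + b * g x) ∂μ) ≤
      a * log (∫ x, exp (f x) ∂μ) + b * log (∫ x, exp (g x) ∂μ) := by
  have hf₀ := integral_exp_pos hf
  have hg₀ := integral_exp_pos hg
  calc log (∫ x, exp (a * f x + b * g x) ∂μ)
      ≤ log ((∫ x, exp (f x) ∂μ) ^ a * (∫ x, exp (g x) ∂μ) ^ b) :=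
        log_le_log (integral_exp_pos (integrable_exp_convexComb hf hg ha hb hab))
          (integral_exp_convexComb_le hf hg ha hb hab)
    _ = _ := by
        rw [log_mul (rpow_pos_of_pos hf₀ a).ne' (rpow_pos_of_pos hg₀ b).ne', log_rpow hf₀,
          log_rpow hg₀]

end ExpHolder

theorem UniformConvexOn.log_integral_exp {α E : Type*} [MeasurableSpace α] {μ : Measure α}
    [NeZero μ] [NormedAddCommGroup E] [NormedSpace ℝ E] {s : Set E} {φ : ℝ → ℝ}
    {F : E → α → ℝ} (hF : ∀ x, UniformConvexOn s φ (fun θ => F θ x))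
    (hint : ∀ θ ∈ s, Integrable (fun x => exp (F θ x)) μ) :
    UniformConvexOn s φ (fun θ => log (∫ x, exp (F θ x) ∂μ)) := by
  obtain ⟨x₀⟩ := μ.nonempty_of_neZero
  refine ⟨(hF x₀).1, fun θ₁ h₁ θ₂ h₂ a b ha hb hab => ?_⟩
  set c := a * b * φ ‖θ₁ - θ₂‖
  have hmem : a • θ₁ + b • θ₂ ∈ s := (hF x₀).1 h₁ h₂ ha hb hab
  have hint₁₂ := integrable_exp_convexComb (hint θ₁ h₁) (hint θ₂ h₂) ha hb hab
  have hcomb := log_integral_exp_convexComb_le (hint θ₁ h₁) (hint θ₂ h₂) ha hb hab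
  calc log (∫ x, exp (F (a • θ₁ + b • θ₂) x) ∂μ)
      ≤ log (∫ x, exp (a * F θ₁ x + b * F θ₂ x - c) ∂μ) := by
        refine log_le_log (integral_exp_pos (hint _ hmem))
          (integral_mono (hint _ hmem) ?_ fun x => exp_le_exp.2 ((hF x).2 h₁ h₂ ha hb hab))
        simpa only [exp_sub] using hint₁₂.div_const (exp c)
    _ = log (∫ x, exp (a * F θ₁ x + b * F θ₂ x) ∂μ) - c := by
        simp only [exp_sub, integral_div]
        rw [log_div (integral_exp_pos hint₁₂).ne' (exp_pos _).ne', log_exp]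
    _ ≤ _ := by
        simp only [smul_eq_mul]
        linarith

theorem stmt_10_general {d : ℕ} (L : EuclideanSpace ℝ (Fin d) → ℝ) (m : ℝ)
    (hL : StrongConvexOn Set.univ m L) (t : ℝ) (ht : 0 < t)
    (μ : Measure (EuclideanSpace ℝ (Fin d))) [IsProbabilityMeasure μ]
    (hint : ∀ θ : EuclideanSpace ℝ (Fin d),
      Integrable (fun ε => Real.exp (t * L (θ + ε))) μ) :
    StrongConvexOn Set.univ m
      (fun θ : EuclideanSpace ℝ (Fin d) =>
        (1 / t) * Real.log (∫ ε, Real.exp (t * L (θ + ε)) ∂μ)) := by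
  have hshift : ∀ ε, StrongConvexOn Set.univ (t * m) (fun θ => t * L (θ + ε)) := fun ε =>
    StrongConvexOn.const_mul (Set.preimage_univ (f := (· + ε)) ▸ hL.comp_add_const ε) ht.le
  have hlog := StrongConvexOn.const_mul (UniformConvexOn.log_integral_exp hshift fun θ _ => hint θ)
    (one_div_pos.2 ht).le
  convert hlog using 1
  field_simp

/-- If L is twice continuously differentiable and m-strongly convex, then the tilted
objective Lᵗ(θ) = (1/t) log E_ε[e^{t L(θ+ε)}] is m-strongly convex. -/
theorem stmt_10 {d : ℕ} (L : EuclideanSpace ℝ (Fin d) → ℝ) (m : ℝ)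
    (hC2 : ContDiff ℝ 2 L) (hL : StrongConvexOn Set.univ m L) (t : ℝ) (ht : 0 < t)
    (μ : Measure (EuclideanSpace ℝ (Fin d))) [IsProbabilityMeasure μ]
    (hint : ∀ θ : EuclideanSpace ℝ (Fin d),
      Integrable (fun ε => Real.exp (t * L (θ + ε))) μ) :
    StrongConvexOn Set.univ m
      (fun θ : EuclideanSpace ℝ (Fin d) =>
        (1 / t) * Real.log (∫ ε, Real.exp (t * L (θ + ε)) ∂μ)) :=
  stmt_10_general L m hL t ht μ hint
end

section
/- For a bounded loss 0 ≤ L ≤ M and t > 0, the gap E_ε[L(θ+ε)] − (1/t) log E_ε[e^{t L(θ+ε)}] is at most −Var_ε(e^{tL(θ+ε)})/(2t e^{2tM}). -/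
/-!
Put `X = exp (t L(θ + ε))`, so `1 ≤ X ≤ b := exp (t M)`, and `m = E X`. Since
`y ↦ -log y - y² / (2b²)` has second derivative `1/y² - 1/b² ≥ 0` on `(0, b]`, it lies above its
tangent line at `m`, i.e. `log X ≤ log m + (X - m)/m - (X - m)²/(2b²)`. Taking expectations, the
linear term vanishes and the quadratic one is the variance: `t E L = E log X ≤ log E X - Var X/(2b²)`.
-/

open MeasureTheory ProbabilityTheory Set

theorem ConvexOn.add_mul_sub_le_of_hasDerivAt {S : Set ℝ} {f : ℝ → ℝ} {f' x y : ℝ}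
    (hf : ConvexOn ℝ S f) (hx : x ∈ S) (hy : y ∈ S) (hf' : HasDerivAt f f' x) :
    f x + f' * (y - x) ≤ f y := by
  rcases lt_trichotomy y x with hyx | rfl | hxy
  · have h := hf.slope_le_of_hasDerivAt hy hx hyx hf'
    rw [slope_def_field, div_le_iff₀ (sub_pos.2 hyx)] at h
    linarith
  · simp
  · have h := hf.le_slope_of_hasDerivAt hx hy hxy hf'
    rw [slope_def_field, le_div_iff₀ (sub_pos.2 hxy)] at h
    linarith

namespace Real

theorem hasDerivAt_neg_log_sub_sq_div {y : ℝ} (hy : y ≠ 0) (b : ℝ) :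
    HasDerivAt (fun y ↦ -log y - y ^ 2 / (2 * b ^ 2)) (-y⁻¹ - y / b ^ 2) y := by
  refine ((hasDerivAt_log hy).neg.sub ((hasDerivAt_pow 2 y).div_const _)).congr_deriv ?_
  push_cast
  ring

theorem convexOn_neg_log_sub_sq_div (b : ℝ) :
    ConvexOn ℝ (Ioc 0 b) (fun y ↦ -log y - y ^ 2 / (2 * b ^ 2)) := by
  refine convexOn_of_hasDerivWithinAt2_nonneg (convex_Ioc 0 b)
    (f' := fun y ↦ -y⁻¹ - y / b ^ 2) (f'' := fun y ↦ (y ^ 2)⁻¹ - (b ^ 2)⁻¹) ?_ ?_ ?_ ?_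
    <;> try rw [interior_Ioc]
  · exact (continuousOn_log.mono fun y hy ↦ hy.1.ne').neg.sub (by fun_prop)
  · exact fun y hy ↦ (hasDerivAt_neg_log_sub_sq_div hy.1.ne' b).hasDerivWithinAt
  · intro y hy
    refine (((hasDerivAt_inv hy.1.ne').neg.sub
      ((hasDerivAt_id y).div_const (b ^ 2))).congr_deriv ?_).hasDerivWithinAt
    simp
  · intro y hy
    have : y ^ 2 ≤ b ^ 2 := pow_le_pow_left₀ hy.1.le hy.2.le 2
    exact sub_nonneg.2 (inv_anti₀ (by positivity [hy.1]) this)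

theorem log_le_log_add_sub_div_sub_sq_div {b m x : ℝ} (hm : m ∈ Ioc 0 b) (hx : x ∈ Ioc 0 b) :
    log x ≤ log m + (x - m) / m - (x - m) ^ 2 / (2 * b ^ 2) := by
  have h := (convexOn_neg_log_sub_sq_div b).add_mul_sub_le_of_hasDerivAt hm hx
    (hasDerivAt_neg_log_sub_sq_div hm.1.ne' b)
  calc log x ≤ log m + m ^ 2 / (2 * b ^ 2) - (-m⁻¹ - m / b ^ 2) * (x - m)
        - x ^ 2 / (2 * b ^ 2) := by linarith
    _ = log m + (x - m) / m - (x - m) ^ 2 / (2 * b ^ 2) := by ring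

end Real

theorem integral_log_le_log_integral_sub_variance_div {Ω : Type*} [MeasurableSpace Ω]
    {μ : Measure Ω} [IsProbabilityMeasure μ] {X : Ω → ℝ} {a b : ℝ} (ha : 0 < a)
    (hX : AEMeasurable X μ) (hXab : ∀ᵐ ω ∂μ, X ω ∈ Icc a b) :
    ∫ ω, Real.log (X ω) ∂μ ≤ Real.log μ[X] - Var[X; μ] / (2 * b ^ 2) := by
  set m := μ[X]
  have hX2 : MemLp X 2 μ := memLp_of_bounded hXab hX.aestronglyMeasurable 2
  have hXint : Integrable X μ := hX2.integrable one_le_two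
  have hm : m ∈ Icc a b := by
    constructor
    · simpa using integral_mono_ae (integrable_const a) hXint (hXab.mono fun _ h ↦ h.1)
    · simpa using integral_mono_ae hXint (integrable_const b) (hXab.mono fun _ h ↦ h.2)
  have hlog : Integrable (fun ω ↦ Real.log (X ω)) μ :=
    (memLp_of_bounded (a := Real.log a) (b := Real.log b)
      (hXab.mono fun _ h ↦ ⟨Real.log_le_log ha h.1, Real.log_le_log (ha.trans_le h.1) h.2⟩)
      (Real.measurable_log.comp_aemeasurable hX).aestronglyMeasurable 1).integrable le_rfl
  have hdev : Integrable (fun ω ↦ X ω - m) μ := hXint.sub (integrable_const m)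
  have hdev2 : Integrable (fun ω ↦ (X ω - m) ^ 2 / (2 * b ^ 2)) μ :=
    (hX2.sub (memLp_const m)).integrable_sq.div_const _
  have hlin : Integrable (fun ω ↦ Real.log m + (X ω - m) / m) μ :=
    (integrable_const _).add (hdev.div_const m)
  calc ∫ ω, Real.log (X ω) ∂μ
      ≤ ∫ ω, (Real.log m + (X ω - m) / m - (X ω - m) ^ 2 / (2 * b ^ 2)) ∂μ := by
        refine integral_mono_ae hlog (hlin.sub hdev2) ?_
        filter_upwards [hXab] with ω hω
        exact Real.log_le_log_add_sub_div_sub_sq_div ⟨ha.trans_le hm.1, hm.2⟩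
          ⟨ha.trans_le hω.1, hω.2⟩
    _ = Real.log m - Var[X; μ] / (2 * b ^ 2) := by
        rw [integral_sub hlin hdev2, integral_add (integrable_const _) (hdev.div_const m),
          integral_div, integral_div, integral_sub hXint (integrable_const m), variance_eq_integral hX]
        simp [m]

theorem stmt_13_general {d : ℕ} {Ω : Type*} [MeasurableSpace Ω]
    (P : Measure Ω) [IsProbabilityMeasure P]
    (ε : Ω → EuclideanSpace ℝ (Fin d)) (hε : Measurable ε)
    (L : EuclideanSpace ℝ (Fin d) → ℝ) (hLm : Measurable L)
    (M : ℝ) (hbd : ∀ x, 0 ≤ L x ∧ L x ≤ M)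
    (t : ℝ) (ht : 0 < t) (θ : EuclideanSpace ℝ (Fin d)) :
    (∫ ω, L (θ + ε ω) ∂P)
        - (1 / t) * Real.log (∫ ω, Real.exp (t * L (θ + ε ω)) ∂P)
      ≤ -(((∫ ω, Real.exp (t * L (θ + ε ω)) ^ 2 ∂P)
            - (∫ ω, Real.exp (t * L (θ + ε ω)) ∂P) ^ 2)
          / (2 * t * Real.exp (2 * t * M))) := by
  have hX : AEMeasurable (fun ω ↦ Real.exp (t * L (θ + ε ω))) P := by fun_prop
  have hXab : ∀ ω, Real.exp (t * L (θ + ε ω)) ∈ Icc 1 (Real.exp (t * M)) := fun ω ↦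
    ⟨Real.one_le_exp (mul_nonneg ht.le (hbd _).1),
      Real.exp_le_exp.2 (mul_le_mul_of_nonneg_left (hbd _).2 ht.le)⟩
  have hgap := integral_log_le_log_integral_sub_variance_div one_pos hX (ae_of_all _ hXab)
  rw [variance_eq_sub (memLp_of_bounded (ae_of_all _ hXab) hX.aestronglyMeasurable 2)] at hgap
  simp only [Real.log_exp, integral_const_mul, Pi.pow_apply] at hgap
  have hsq : Real.exp (2 * t * M) = Real.exp (t * M) ^ 2 := by
    rw [← Real.exp_nat_mul]; ring_nf
  rw [hsq]
  field_simp at hgap ⊢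
  linarith

/-- For bounded loss 0 ≤ L ≤ M and t > 0, the gap
E_ε[L(θ+ε)] − (1/t) log E_ε[e^{t L(θ+ε)}] is at most −Var_ε(e^{tL(θ+ε)})/(2t e^{2tM}). -/
theorem stmt_13 {d : ℕ} {Ω : Type*} [MeasurableSpace Ω]
    (P : Measure Ω) [IsProbabilityMeasure P]
    (ε : Ω → EuclideanSpace ℝ (Fin d)) (hε : Measurable ε)
    (L : EuclideanSpace ℝ (Fin d) → ℝ) (hLm : Measurable L)
    (M : ℝ) (hM : 0 ≤ M) (hbd : ∀ x, 0 ≤ L x ∧ L x ≤ M)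
    (t : ℝ) (ht : 0 < t) (θ : EuclideanSpace ℝ (Fin d)) :
    (∫ ω, L (θ + ε ω) ∂P)
        - (1 / t) * Real.log (∫ ω, Real.exp (t * L (θ + ε ω)) ∂P)
      ≤ -(((∫ ω, Real.exp (t * L (θ + ε ω)) ^ 2 ∂P)
            - (∫ ω, Real.exp (t * L (θ + ε ω)) ∂P) ^ 2)
          / (2 * t * Real.exp (2 * t * M))) :=
  stmt_13_general P ε hε L hLm M hbd t ht θ
end
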